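/- arXiv:2006.12625 — 2 statements merged into one kernel-verified Lean document; each statement's English description precedes it below -/
import Mathlib

section
/- Let Φ^{-1} denote the quantile function of the standard normal distribution. Then as v ↑ 1, Φ^{-1}(v) / √(2 log(1/(1−v))) → 1. -/
open MeasureTheory ProbabilityTheory Real Filter

/-- standard normal density -/
noncomputable def stdPDF (x : ℝ) : ℝ := (Real.sqrt (2 * Real.pi))⁻¹ * Real.exp (-(x ^ 2) / 2)

/-- standard normal CDF -/
noncomputable def stdCDF (x : ℝ) : ℝ := ∫ t in Set.Iic x, stdPDF t

/-!
With `Q x = 1 - Φ x = ∫_x^∞ φ`, the bounds `φ (x + 1) ≤ Q x ≤ φ x / x` (the upper one from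
`t φ t = -φ' t`) give `x² ≤ 2 log (1 / Q x) ≤ (x + 1)² + log (2π)` for `x ≥ 1`, so
`x / √(2 log (1 / Q x)) → 1` as `x → ∞`. Since `Φ` is monotone and stays below `1`,
`Φ⁻¹ v → ∞` as `v ↑ 1`, and substituting `x = Φ⁻¹ v`, `Q x = 1 - v` gives the claim.
-/

open Set Topology

lemma stdPDF_pos (x : ℝ) : 0 < stdPDF x := by
  unfold stdPDF
  positivity

lemma stdPDF_eq : stdPDF = fun x ↦ (√(2 * π))⁻¹ * exp (-(1 / 2) * x ^ 2) := by
  ext x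
  rw [stdPDF]
  ring_nf

lemma integrable_stdPDF : Integrable stdPDF := by
  rw [stdPDF_eq]
  exact (integrable_exp_neg_mul_sq (by norm_num : (0 : ℝ) < 1 / 2)).const_mul (√(2 * π))⁻¹

lemma integrable_mul_stdPDF : Integrable fun t ↦ t * stdPDF t := by
  simpa only [stdPDF_eq, mul_left_comm] using
    (integrable_mul_exp_neg_mul_sq (by norm_num : (0 : ℝ) < 1 / 2)).const_mul (√(2 * π))⁻¹

lemma integral_stdPDF : ∫ x, stdPDF x = 1 := by
  simp only [stdPDF_eq, integral_const_mul, integral_gaussian]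
  rw [show π / (1 / 2) = 2 * π by ring]
  exact inv_mul_cancel₀ (by positivity)

lemma hasDerivAt_stdPDF (x : ℝ) : HasDerivAt stdPDF (-x * stdPDF x) x := by
  have h : HasDerivAt (fun y : ℝ ↦ -(y ^ 2) / 2) (-x) x :=
    ((hasDerivAt_pow 2 x).neg.div_const 2).congr_deriv (by ring)
  exact (h.exp.const_mul (√(2 * π))⁻¹).congr_deriv (by rw [stdPDF]; ring)

lemma tendsto_stdPDF_atTop : Tendsto stdPDF atTop (𝓝 0) := by
  have h : Tendsto (fun x : ℝ ↦ -(1 / 2) * x ^ 2) atTop atBot :=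
    (tendsto_pow_atTop two_ne_zero).const_mul_atTop_of_neg (by norm_num)
  rw [stdPDF_eq, ← mul_zero (√(2 * π))⁻¹]
  exact (tendsto_exp_atBot.comp h).const_mul _

lemma stdPDF_le_stdPDF {a b : ℝ} (ha : 0 ≤ a) (hab : a ≤ b) : stdPDF b ≤ stdPDF a := by
  unfold stdPDF
  gcongr

lemma integral_Ioi_mul_stdPDF (x : ℝ) : ∫ t in Ioi x, t * stdPDF t = stdPDF x := by
  have hderiv (t : ℝ) : HasDerivAt (fun y ↦ -stdPDF y) (t * stdPDF t) t :=
    (hasDerivAt_stdPDF t).neg.congr_deriv (by ring)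
  have h := integral_Ioi_of_hasDerivAt_of_tendsto' (a := x) (fun t _ ↦ hderiv t)
    integrable_mul_stdPDF.integrableOn tendsto_stdPDF_atTop.neg
  rwa [neg_zero, zero_sub, neg_neg] at h

lemma one_sub_stdCDF (x : ℝ) : 1 - stdCDF x = ∫ t in Ioi x, stdPDF t := by
  rw [← integral_stdPDF, ← intervalIntegral.integral_Iic_add_Ioi (b := x)
    integrable_stdPDF.integrableOn integrable_stdPDF.integrableOn, stdCDF, add_sub_cancel_left]

lemma stdCDF_lt_one (x : ℝ) : stdCDF x < 1 := by
  have hQ : 0 < ∫ t in Ioi x, stdPDF t := by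
    rw [setIntegral_pos_iff_support_of_nonneg_ae (.of_forall fun t ↦ (stdPDF_pos t).le)
      integrable_stdPDF.integrableOn, Function.support_eq_univ fun t ↦ (stdPDF_pos t).ne',
      univ_inter, volume_Ioi]
    exact ENNReal.zero_lt_top
  linarith [one_sub_stdCDF x]

lemma stdCDF_mono : Monotone stdCDF := fun _ _ hab ↦
  setIntegral_mono_set integrable_stdPDF.integrableOn (.of_forall fun t ↦ (stdPDF_pos t).le)
    (Iic_subset_Iic.2 hab).eventuallyLE

lemma one_sub_stdCDF_le_stdPDF_div {x : ℝ} (hx : 0 < x) : 1 - stdCDF x ≤ stdPDF x / x := by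
  rw [one_sub_stdCDF, div_eq_inv_mul, ← integral_Ioi_mul_stdPDF, ← integral_const_mul]
  refine setIntegral_mono_on integrable_stdPDF.integrableOn
    (integrable_mul_stdPDF.const_mul _).integrableOn measurableSet_Ioi fun t ht ↦ ?_
  rw [← mul_assoc, le_mul_iff_one_le_left (stdPDF_pos t), ← div_eq_inv_mul, one_le_div hx]
  exact ht.out.le

lemma stdPDF_add_one_le_one_sub_stdCDF {x : ℝ} (hx : 0 ≤ x) : stdPDF (x + 1) ≤ 1 - stdCDF x := by
  calc stdPDF (x + 1) = ∫ _ in Ioc x (x + 1), stdPDF (x + 1) := by simp [volume_real_Ioc]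
    _ ≤ ∫ t in Ioc x (x + 1), stdPDF t :=
      setIntegral_mono_on (by simp) integrable_stdPDF.integrableOn measurableSet_Ioc
        fun t ht ↦ stdPDF_le_stdPDF (hx.trans ht.1.le) ht.2
    _ ≤ ∫ t in Ioi x, stdPDF t :=
      setIntegral_mono_set integrable_stdPDF.integrableOn
        (.of_forall fun t ↦ (stdPDF_pos t).le) Ioc_subset_Ioi_self.eventuallyLE
    _ = 1 - stdCDF x := (one_sub_stdCDF x).symm

lemma sq_le_two_mul_log_one_div_one_sub_stdCDF {x : ℝ} (hx : 1 ≤ x) :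
    x ^ 2 ≤ 2 * log (1 / (1 - stdCDF x)) := by
  have hQ : 0 < 1 - stdCDF x := sub_pos.2 (stdCDF_lt_one x)
  have hQ_le : 1 - stdCDF x ≤ exp (-(x ^ 2) / 2) :=
    calc 1 - stdCDF x ≤ stdPDF x / x := one_sub_stdCDF_le_stdPDF_div (by linarith)
      _ ≤ stdPDF x := div_le_self (stdPDF_pos x).le hx
      _ ≤ exp (-(x ^ 2) / 2) := by
        rw [stdPDF]
        refine mul_le_of_le_one_left (exp_pos _).le (inv_le_one_of_one_le₀ ?_)
        rw [one_le_sqrt]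
        linarith [pi_gt_three]
  have := log_le_log hQ hQ_le
  rw [log_exp] at this
  rw [one_div, log_inv]
  linarith

lemma two_mul_log_one_div_one_sub_stdCDF_le {x : ℝ} (hx : 0 ≤ x) :
    2 * log (1 / (1 - stdCDF x)) ≤ (x + 1) ^ 2 + log (2 * π) := by
  have hlog := log_le_log (stdPDF_pos _) (stdPDF_add_one_le_one_sub_stdCDF hx)
  rw [stdPDF, log_mul (by positivity) (exp_pos _).ne', log_inv, log_exp, log_sqrt (by positivity)]
    at hlog
  rw [one_div, log_inv]
  linarith

lemma tendsto_div_sqrt_of_sq_le_of_le_add_sq {g : ℝ → ℝ} (c : ℝ)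
    (hlow : ∀ᶠ x in atTop, x ^ 2 ≤ g x) (hup : ∀ᶠ x in atTop, g x ≤ (x + c) ^ 2) :
    Tendsto (fun x ↦ x / √(g x)) atTop (𝓝 1) := by
  have hshift : Tendsto (fun x ↦ x + c) atTop atTop := tendsto_atTop_add_const_right _ c tendsto_id
  have hpos : ∀ᶠ x in atTop, 0 < x ∧ 0 < x + c :=
    (eventually_gt_atTop 0).and (hshift.eventually_gt_atTop 0)
  have hratio : Tendsto (fun x ↦ x / (x + c)) atTop (𝓝 1) := by
    have h : Tendsto (fun x ↦ 1 - c / (x + c)) atTop (𝓝 1) := by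
      simpa using tendsto_const_nhds.sub (tendsto_const_nhds.div_atTop hshift)
    refine h.congr' ?_
    filter_upwards [hpos] with x ⟨_, hxc⟩
    field_simp
    ring
  refine tendsto_of_tendsto_of_tendsto_of_le_of_le' hratio tendsto_const_nhds ?_ ?_
  · filter_upwards [hlow, hup, hpos] with x hxlow hxup ⟨hx, hxc⟩
    have hsqrt_low : x ≤ √(g x) := le_sqrt_of_sq_le hxlow
    have hsqrt_up : √(g x) ≤ x + c := sqrt_le_iff.2 ⟨hxc.le, hxup⟩
    exact div_le_div_of_nonneg_left hx.le (hx.trans_le hsqrt_low) hsqrt_up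
  · filter_upwards [hlow] with x hxlow
    exact div_le_one_of_le₀ (le_sqrt_of_sq_le hxlow) (sqrt_nonneg _)

lemma tendsto_div_sqrt_two_mul_log_one_div_one_sub_stdCDF :
    Tendsto (fun x ↦ x / √(2 * log (1 / (1 - stdCDF x)))) atTop (𝓝 1) := by
  have hL : 0 ≤ log (2 * π) := log_nonneg (by linarith [pi_gt_three])
  refine tendsto_div_sqrt_of_sq_le_of_le_add_sq (1 + √(log (2 * π)))
    ((eventually_ge_atTop 1).mono fun x hx ↦ sq_le_two_mul_log_one_div_one_sub_stdCDF hx)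
    ((eventually_ge_atTop 0).mono fun x hx ↦ ?_)
  refine (two_mul_log_one_div_one_sub_stdCDF_le hx).trans ?_
  nlinarith [sq_sqrt hL, sqrt_nonneg (log (2 * π))]

lemma tendsto_atTop_of_monotone_of_apply_eq {α β : Type*} [LinearOrder α] [LinearOrder β]
    [TopologicalSpace β] [OrderTopology β] {F : α → β} {G : β → α} {a : β}
    (hF : Monotone F) (hFa : ∀ x, F x < a) (hFG : ∀ᶠ v in 𝓝[<] a, F (G v) = v) :
    Tendsto G (𝓝[<] a) atTop := by
  refine tendsto_atTop.2 fun M ↦ ?_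
  filter_upwards [hFG, Ioo_mem_nhdsLT (hFa M)] with v hv hvM
  exact (hF.reflect_lt (hv.symm ▸ hvM.1)).le

/-- the standard normal quantile function satisfies
Φ⁻¹(v) / √(2 log(1/(1−v))) → 1 as v ↑ 1. -/
theorem stmt_4 (Φinv : ℝ → ℝ) (hΦinv : ∀ v ∈ Set.Ioo (0:ℝ) 1, stdCDF (Φinv v) = v) :
    Tendsto (fun v : ℝ => Φinv v / Real.sqrt (2 * Real.log (1 / (1 - v))))
      (nhdsWithin 1 (Set.Iio 1)) (nhds 1) := by
  have hinv : ∀ᶠ v in 𝓝[<] (1 : ℝ), stdCDF (Φinv v) = v :=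
    eventually_of_mem (Ioo_mem_nhdsLT zero_lt_one) hΦinv
  have hΦinv_top : Tendsto Φinv (𝓝[<] 1) atTop :=
    tendsto_atTop_of_monotone_of_apply_eq stdCDF_mono stdCDF_lt_one hinv
  refine (tendsto_div_sqrt_two_mul_log_one_div_one_sub_stdCDF.comp hΦinv_top).congr' ?_
  filter_upwards [hinv] with v hv
  simp only [Function.comp_apply, hv]
end

section
/- Let a > 0 and n ≥ 1, and let Φ, φ be the standard normal CDF and PDF. Then the change of variables u = n(1 − Φ(a z)) gives the identity ∫_{-∞}^{∞} Φ(a z)^n φ(z) dz = ((2π)^{(1/a² − 1)/2} / (n a)) ∫_0^n (1 − u/n)^n (φ(Φ^{-1}(1 − u/n)))^{1/a² − 1} du. -/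
/-! Substituting `x = a z` turns the left side into `a⁻¹ ∫ Φ(x)^n φ(x/a) dx`, and since both are
Gaussians, `φ(x/a) = (2π)^((1/a² - 1)/2) φ(x)^(1/a²)`. The probability integral transform
`v = Φ(x)`, `dv = φ(x) dx`, then gives `∫₀¹ v^n φ(Φ⁻¹ v)^(1/a² - 1) dv`, and `v = 1 - u/n` finishes. -/

open MeasureTheory ProbabilityTheory Real Filter

open Set Topology

lemma stdPDF_eq_gaussianPDFReal : stdPDF = gaussianPDFReal 0 1 := by
  ext x
  simp [stdPDF, gaussianPDFReal]

lemma continuous_stdPDF : Continuous stdPDF := by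
  unfold stdPDF
  fun_prop

lemma stdCDF_eq_cdf : stdCDF = cdf (gaussianReal 0 1) := by
  ext x
  rw [cdf_eq_real, measureReal_def, gaussianReal_apply_eq_integral _ one_ne_zero,
    ENNReal.toReal_ofReal
      (setIntegral_nonneg measurableSet_Iic fun t _ ↦ gaussianPDFReal_nonneg _ _ t),
    stdCDF, stdPDF_eq_gaussianPDFReal]

lemma hasDerivAt_stdCDF (x : ℝ) : HasDerivAt stdCDF (stdPDF x) x := by
  have hsplit : ∀ y, stdCDF y = stdCDF 0 + ∫ t in (0 : ℝ)..y, stdPDF t := fun y ↦ by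
    rw [stdCDF, stdCDF, ← intervalIntegral.integral_Iic_sub_Iic integrable_stdPDF.integrableOn
      integrable_stdPDF.integrableOn]
    ring
  refine HasDerivAt.congr_of_eventuallyEq ?_ (Eventually.of_forall hsplit)
  exact (intervalIntegral.integral_hasDerivAt_right integrable_stdPDF.intervalIntegrable
    (continuous_stdPDF.stronglyMeasurableAtFilter _ _) continuous_stdPDF.continuousAt).const_add _

lemma continuous_stdCDF : Continuous stdCDF :=
  continuous_iff_continuousAt.2 fun x ↦ (hasDerivAt_stdCDF x).continuousAt

lemma strictMono_stdCDF : StrictMono stdCDF :=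
  strictMono_of_deriv_pos fun x ↦ (hasDerivAt_stdCDF x).deriv ▸ stdPDF_pos x

lemma range_stdCDF : range stdCDF = Ioo 0 1 := by
  have h_nonneg (y : ℝ) : 0 ≤ stdCDF y := stdCDF_eq_cdf ▸ cdf_nonneg _ y
  have h_le_one (y : ℝ) : stdCDF y ≤ 1 := stdCDF_eq_cdf ▸ cdf_le_one _ y
  have h_atBot : Tendsto stdCDF atBot (𝓝 0) := stdCDF_eq_cdf ▸ tendsto_cdf_atBot _
  have h_atTop : Tendsto stdCDF atTop (𝓝 1) := stdCDF_eq_cdf ▸ tendsto_cdf_atTop _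
  refine Subset.antisymm ?_ fun v ⟨hv₀, hv₁⟩ ↦ ?_
  · rintro _ ⟨x, rfl⟩
    exact ⟨(h_nonneg (x - 1)).trans_lt (strictMono_stdCDF (sub_one_lt x)),
      (strictMono_stdCDF (lt_add_one x)).trans_le (h_le_one (x + 1))⟩
  · exact mem_range_of_exists_le_of_exists_ge continuous_stdCDF
      (h_atBot.eventually_le_const hv₀).exists (h_atTop.eventually_const_le hv₁).exists

lemma integral_stdPDF_smul_comp_stdCDF {E : Type*} [NormedAddCommGroup E] [NormedSpace ℝ E]
    (f : ℝ → E) : ∫ x, stdPDF x • f (stdCDF x) = ∫ v in Ioo 0 1, f v := by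
  have h := integral_image_eq_integral_abs_deriv_smul MeasurableSet.univ
    (fun x _ ↦ (hasDerivAt_stdCDF x).hasDerivWithinAt) strictMono_stdCDF.injective.injOn f
  simp_rw [image_univ, range_stdCDF, setIntegral_univ, abs_of_pos (stdPDF_pos _)] at h
  exact h.symm

lemma stdPDF_div (a : ℝ) (ha : a ≠ 0) (x : ℝ) :
    stdPDF (x / a) = (2 * π) ^ ((1 / a ^ 2 - 1) / 2) * stdPDF x ^ (1 / a ^ 2 - 1) * stdPDF x := by
  have h2π : 0 < 2 * π := by positivity
  have h_exp (x : ℝ) : stdPDF x = exp (-(1 / 2) * log (2 * π) - x ^ 2 / 2) := by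
    rw [stdPDF, sqrt_eq_rpow, ← rpow_neg h2π.le, rpow_def_of_pos h2π, ← exp_add]
    ring_nf
  rw [h_exp, h_exp, rpow_def_of_pos h2π, ← exp_mul, ← exp_add, ← exp_add]
  congr 1
  field_simp
  ring

lemma intervalIntegral_comp_one_sub_div {E : Type*} [NormedAddCommGroup E] [NormedSpace ℝ E]
    (f : ℝ → E) {t : ℝ} (ht : t ≠ 0) :
    ∫ u in (0 : ℝ)..t, f (1 - u / t) = t • ∫ v in Ioo 0 1, f v := by
  rw [intervalIntegral.integral_comp_sub_div _ ht, div_self ht, sub_self, zero_div, sub_zero,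
    intervalIntegral.integral_of_le zero_le_one, integral_Ioc_eq_integral_Ioo]

/-- change of variables u = n(1 − Φ(az)) gives
∫ Φ(az)^n φ(z) dz = ((2π)^{(1/a²−1)/2}/(na)) ∫_0^n (1−u/n)^n (φ(Φ⁻¹(1−u/n)))^{1/a²−1} du. -/
theorem stmt_6 (a : ℝ) (ha : 0 < a) (n : ℕ) (hn : 1 ≤ n)
    (Φinv : ℝ → ℝ) (hΦinv : ∀ v ∈ Set.Ioo (0:ℝ) 1, stdCDF (Φinv v) = v) :
    ∫ z, (stdCDF (a * z)) ^ n * stdPDF z =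
      (2 * Real.pi) ^ ((1 / a ^ 2 - 1) / 2) / (n * a) *
        ∫ u in (0:ℝ)..(n:ℝ),
          (1 - u / n) ^ n * (stdPDF (Φinv (1 - u / n))) ^ (1 / a ^ 2 - 1) := by
  set c := 1 / a ^ 2 - 1
  set H : ℝ → ℝ := fun v ↦ v ^ n * stdPDF (Φinv v) ^ c
  have hΦinv_stdCDF (x : ℝ) : Φinv (stdCDF x) = x :=
    strictMono_stdCDF.injective (hΦinv _ (range_stdCDF ▸ mem_range_self x))
  have hn₀ : (n : ℝ) ≠ 0 := Nat.cast_ne_zero.2 (Nat.one_le_iff_ne_zero.1 hn)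
  calc ∫ z, stdCDF (a * z) ^ n * stdPDF z
      = a⁻¹ * ∫ x, stdCDF x ^ n * stdPDF (x / a) := by
        rw [← abs_of_pos (inv_pos.2 ha), ← smul_eq_mul,
          ← Measure.integral_comp_mul_left (fun x ↦ stdCDF x ^ n * stdPDF (x / a))]
        simp_rw [mul_div_cancel_left₀ _ ha.ne']
    _ = (2 * π) ^ (c / 2) / a * ∫ x, stdPDF x • H (stdCDF x) := by
        simp_rw [stdPDF_div a ha.ne', H, hΦinv_stdCDF, smul_eq_mul, ← integral_const_mul]
        congr 1 with x
        ring
    _ = _ := by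
        rw [integral_stdPDF_smul_comp_stdCDF, intervalIntegral_comp_one_sub_div H hn₀, smul_eq_mul]
        field_simp
end
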